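/- arXiv:1809.09891 — 2 statements merged into one kernel-verified Lean document; each statement's English description precedes it below -/
import Mathlib

section
/- Let z(k) be generated by z(k+1) = (1-α) z(k) + α T(z(k)) with T nonexpansive on R^d, Fix(T) ≠ ∅, and α ∈ (0,1). Then ‖T(z(k)) - z(k)‖ → 0 as k → ∞ (asymptotic regularity of the Krasnosel'skii–Mann iteration in finite dimension). -/
/-! The squared distance to a fixed point `p` is a Lyapunov function for the iteration: by the
identity `‖(1-α)a + αb‖² = (1-α)‖a‖² + α‖b‖² - α(1-α)‖a-b‖²`, each step decreases it by at least
`α(1-α)‖T zₖ - zₖ‖²`. These decrements therefore have summable total, so they tend to zero. -/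

open Filter Topology

section InnerProductSpace

variable {E : Type*} [NormedAddCommGroup E] [InnerProductSpace ℝ E]

lemma norm_one_sub_smul_add_smul_sq (a b : E) (α : ℝ) :
    ‖(1 - α) • a + α • b‖ ^ 2 = (1 - α) * ‖a‖ ^ 2 + α * ‖b‖ ^ 2 - α * (1 - α) * ‖a - b‖ ^ 2 := by
  simp only [← real_inner_self_eq_norm_sq, inner_add_add_self, inner_sub_sub_self,
    real_inner_smul_left, real_inner_smul_right]
  ring

lemma norm_one_sub_smul_add_smul_sub_sq_add_le {x y p : E} (hy : ‖y - p‖ ≤ ‖x - p‖) {α : ℝ}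
    (hα : 0 ≤ α) :
    ‖(1 - α) • x + α • y - p‖ ^ 2 + α * (1 - α) * ‖y - x‖ ^ 2 ≤ ‖x - p‖ ^ 2 := by
  have hsplit : (1 - α) • x + α • y - p = (1 - α) • (x - p) + α • (y - p) := by module
  have hsq : ‖y - p‖ ^ 2 ≤ ‖x - p‖ ^ 2 := pow_le_pow_left₀ (norm_nonneg _) hy 2
  rw [hsplit, norm_one_sub_smul_add_smul_sq, sub_sub_sub_cancel_right, norm_sub_rev x y]
  nlinarith [mul_le_mul_of_nonneg_left hsq hα]

theorem tendsto_norm_sub_krasnoselskiiMann {T : E → E} {p : E}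
    (hT : ∀ x, ‖T x - p‖ ≤ ‖x - p‖) {α : ℝ} (hα0 : 0 < α) (hα1 : α < 1) {z : ℕ → E}
    (hz : ∀ k, z (k + 1) = (1 - α) • z k + α • T (z k)) :
    Tendsto (fun k ↦ ‖T (z k) - z k‖) atTop (𝓝 0) := by
  have hα : 0 < α * (1 - α) := mul_pos hα0 (sub_pos.mpr hα1)
  have hdecr (k : ℕ) :
      ‖z (k + 1) - p‖ ^ 2 + α * (1 - α) * ‖T (z k) - z k‖ ^ 2 ≤ ‖z k - p‖ ^ 2 := by
    rw [hz k]
    exact norm_one_sub_smul_add_smul_sub_sq_add_le (hT (z k)) hα0.le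
  have hsum : Summable fun k ↦ α * (1 - α) * ‖T (z k) - z k‖ ^ 2 := by
    refine summable_of_sum_range_le (c := ‖z 0 - p‖ ^ 2) (fun k ↦ by positivity) fun n ↦ ?_
    calc ∑ k ∈ Finset.range n, α * (1 - α) * ‖T (z k) - z k‖ ^ 2
        ≤ ∑ k ∈ Finset.range n, (‖z k - p‖ ^ 2 - ‖z (k + 1) - p‖ ^ 2) :=
          Finset.sum_le_sum fun k _ ↦ by linarith [hdecr k]
      _ = ‖z 0 - p‖ ^ 2 - ‖z n - p‖ ^ 2 := Finset.sum_range_sub' _ n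
      _ ≤ ‖z 0 - p‖ ^ 2 := sub_le_self _ (by positivity)
  have hsq : Tendsto (fun k ↦ ‖T (z k) - z k‖ ^ 2) atTop (𝓝 0) := by
    simpa only [inv_mul_cancel_left₀ hα.ne', mul_zero] using
      hsum.tendsto_atTop_zero.const_mul (α * (1 - α))⁻¹
  simpa only [Real.sqrt_sq (norm_nonneg _), Real.sqrt_zero] using hsq.sqrt

end InnerProductSpace

/-- Asymptotic regularity of the Krasnosel'skii–Mann iteration: for `T`
nonexpansive on `ℝ^d` with a fixed point and `α ∈ (0,1)`, the iterates
`z(k+1) = (1-α) z(k) + α T(z(k))` satisfy `‖T(z(k)) - z(k)‖ → 0`. -/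
theorem stmt12 (d : ℕ)
    (T : EuclideanSpace ℝ (Fin d) → EuclideanSpace ℝ (Fin d))
    (hT : ∀ x y, ‖T x - T y‖ ≤ ‖x - y‖)
    (zstar : EuclideanSpace ℝ (Fin d)) (hz : T zstar = zstar)
    (α : ℝ) (hα0 : 0 < α) (hα1 : α < 1)
    (z : ℕ → EuclideanSpace ℝ (Fin d))
    (hiter : ∀ k, z (k + 1) = (1 - α) • z k + α • T (z k)) :
    Tendsto (fun k => ‖T (z k) - z k‖) atTop (nhds 0) :=
  tendsto_norm_sub_krasnoselskiiMann (fun x ↦ hz ▸ hT x zstar) hα0 hα1 hiter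
end

section
/- Expected one-step contraction toward fixed points under i.i.d. Bernoulli coordinate updates: let T be nonexpansive on R^d with fixed point z*, α ∈ (0,1), and suppose each coordinate independently applies the update (1-α)z_i + α(Tz)_i with probability 1-p (else keeps z_i). Then the expected squared distance satisfies E‖z' - z*‖² ≤ ‖z - z*‖² - (1-p) α(1-α) ‖T z - z‖², where the expectation is over the Bernoulli loss variables. -/
/-!
Write `u = (1 - α) z + α T z` for the full relaxed step. Because the squared Euclidean norm is a
sum over coordinates and each coordinate is updated independently with probability `1 - p`, the
expected squared distance is exactly `(1 - p) ‖u - z*‖² + p ‖z - z*‖²`. The full step satisfies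
`‖u - z*‖² ≤ ‖z - z*‖² - α (1 - α) ‖T z - z‖²`, by the identity
`‖(1 - α) a + α b‖² = (1 - α) ‖a‖² + α ‖b‖² - α (1 - α) ‖a - b‖²` with `a = z - z*`,
`b = T z - z*` and nonexpansiveness `‖T z - z*‖ ≤ ‖z - z*‖`.
-/

open Finset

section Bernoulli

variable {ι R : Type*} [Fintype ι] [DecidableEq ι] [CommRing R]

theorem Fintype.sum_pow_card_mul_pow_card_compl_mul_ite {q r : R} (hqr : q + r = 1)
    (i : ι) (a b : R) :
    ∑ S : Finset ι, q ^ #S * r ^ #Sᶜ * (if i ∈ S then a else b) = q * a + r * b := by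
  -- Expand `∏ⱼ (q + r) = 1` with the `i`-th factor replaced by `q * a + r * b`.
  have hprod := Fintype.prod_add (fun j ↦ q * if j = i then a else 1)
    (fun j ↦ r * if j = i then b else 1)
  have hfactor : ∀ j, ((q * if j = i then a else 1) + r * if j = i then b else 1) =
      if j = i then q * a + r * b else 1 := by
    intro j; split_ifs <;> simp [hqr]
  simp only [hfactor, Fintype.prod_ite_eq', prod_mul_distrib, prod_const,
    Finset.prod_ite_eq' _ i fun _ ↦ a, Finset.prod_ite_eq' _ i fun _ ↦ b, mem_compl] at hprod
  rw [hprod]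
  refine Fintype.sum_congr _ _ fun S ↦ ?_
  split_ifs <;> ring

theorem EuclideanSpace.sum_pow_card_mul_pow_card_compl_mul_norm_sq_ite {q r : ℝ}
    (hqr : q + r = 1) (x y : EuclideanSpace ℝ ι) :
    ∑ S : Finset ι, q ^ #S * r ^ #Sᶜ *
        ‖WithLp.toLp 2 (fun i ↦ if i ∈ S then x i else y i)‖ ^ 2 =
      q * ‖x‖ ^ 2 + r * ‖y‖ ^ 2 := by
  simp only [EuclideanSpace.real_norm_sq_eq, apply_ite (· ^ 2), mul_sum]
  rw [sum_comm]
  simp only [Fintype.sum_pow_card_mul_pow_card_compl_mul_ite hqr, sum_add_distrib]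

end Bernoulli

section RelaxedStep

variable {F : Type*} [NormedAddCommGroup F] [InnerProductSpace ℝ F]

theorem norm_smul_add_smul_sub_sq (x y c : F) (α : ℝ) :
    ‖(1 - α) • x + α • y - c‖ ^ 2 =
      (1 - α) * ‖x - c‖ ^ 2 + α * ‖y - c‖ ^ 2 - α * (1 - α) * ‖y - x‖ ^ 2 := by
  rw [show (1 - α) • x + α • y - c = (1 - α) • (x - c) + α • (y - c) by module,
    show y - x = (y - c) - (x - c) by abel]
  generalize x - c = a, y - c = b
  rw [norm_add_sq_real, norm_sub_sq_real, norm_smul, norm_smul, inner_smul_left,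
    inner_smul_right, Real.norm_eq_abs, Real.norm_eq_abs, mul_pow, mul_pow, sq_abs, sq_abs,
    real_inner_comm, RCLike.conj_to_real]
  ring

theorem norm_smul_add_smul_sub_sq_le {x y c : F} {α : ℝ} (hα : 0 ≤ α)
    (hy : ‖y - c‖ ≤ ‖x - c‖) :
    ‖(1 - α) • x + α • y - c‖ ^ 2 ≤ ‖x - c‖ ^ 2 - α * (1 - α) * ‖y - x‖ ^ 2 := by
  have hsq : ‖y - c‖ ^ 2 ≤ ‖x - c‖ ^ 2 := by gcongr
  rw [norm_smul_add_smul_sub_sq]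
  nlinarith [mul_le_mul_of_nonneg_left hsq hα]

end RelaxedStep

theorem stmt18_general (d : ℕ)
    (T : EuclideanSpace ℝ (Fin d) → EuclideanSpace ℝ (Fin d))
    (hT : ∀ x y, ‖T x - T y‖ ≤ ‖x - y‖)
    (zstar : EuclideanSpace ℝ (Fin d)) (hz : T zstar = zstar)
    (α : ℝ) (hα0 : 0 < α)
    (p : ℝ) (hp1 : p < 1)
    (z : EuclideanSpace ℝ (Fin d)) :
    let u : EuclideanSpace ℝ (Fin d) := (1 - α) • z + α • T z
    let z' : Finset (Fin d) → EuclideanSpace ℝ (Fin d) :=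
      fun S => WithLp.toLp 2 (fun i => if i ∈ S then u i else z i)
    ∑ S : Finset (Fin d),
        ((1 - p) ^ S.card * p ^ (d - S.card)) * ‖z' S - zstar‖ ^ 2 ≤
      ‖z - zstar‖ ^ 2 - (1 - p) * α * (1 - α) * ‖T z - z‖ ^ 2 := by
  intro u z'
  have hz' : ∀ S, z' S - zstar =
      WithLp.toLp 2 (fun i ↦ if i ∈ S then (u - zstar) i else (z - zstar) i) := by
    intro S; ext i; by_cases hi : i ∈ S <;> simp [z', hi]
  have hcard : ∀ S : Finset (Fin d), d - #S = #Sᶜ := by simp [card_compl]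
  have hmean : ∑ S : Finset (Fin d), ((1 - p) ^ #S * p ^ (d - #S)) * ‖z' S - zstar‖ ^ 2 =
      (1 - p) * ‖u - zstar‖ ^ 2 + p * ‖z - zstar‖ ^ 2 := by
    simp only [hz', hcard]
    exact EuclideanSpace.sum_pow_card_mul_pow_card_compl_mul_norm_sq_ite (sub_add_cancel 1 p) _ _
  have hstep : ‖u - zstar‖ ^ 2 ≤ ‖z - zstar‖ ^ 2 - α * (1 - α) * ‖T z - z‖ ^ 2 :=
    norm_smul_add_smul_sub_sq_le hα0.le (by simpa only [hz] using hT z zstar)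
  rw [hmean]
  linarith [mul_le_mul_of_nonneg_left hstep (sub_nonneg.2 hp1.le)]

/-- Expected one-step contraction toward a fixed point under i.i.d. Bernoulli
coordinate updates: each coordinate applies the relaxed update with probability
`1-p` independently; the expected squared distance to a fixed point `z*`
decreases by at least `(1-p) α (1-α) ‖T z - z‖²`. -/
theorem stmt18 (d : ℕ)
    (T : EuclideanSpace ℝ (Fin d) → EuclideanSpace ℝ (Fin d))
    (hT : ∀ x y, ‖T x - T y‖ ≤ ‖x - y‖)
    (zstar : EuclideanSpace ℝ (Fin d)) (hz : T zstar = zstar)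
    (α : ℝ) (hα0 : 0 < α) (hα1 : α < 1)
    (p : ℝ) (hp0 : 0 ≤ p) (hp1 : p < 1)
    (z : EuclideanSpace ℝ (Fin d)) :
    let u : EuclideanSpace ℝ (Fin d) := (1 - α) • z + α • T z
    let z' : Finset (Fin d) → EuclideanSpace ℝ (Fin d) :=
      fun S => WithLp.toLp 2 (fun i => if i ∈ S then u i else z i)
    ∑ S : Finset (Fin d),
        ((1 - p) ^ S.card * p ^ (d - S.card)) * ‖z' S - zstar‖ ^ 2 ≤
      ‖z - zstar‖ ^ 2 - (1 - p) * α * (1 - α) * ‖T z - z‖ ^ 2 :=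
  stmt18_general d T hT zstar hz α hα0 p hp1 z
end
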